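/- Let π be a policy on M (taking actions only in A) such that the discounted probability of visiting a state-action pair with ζ(s,a) = 0 is at most ε_ζ, i.e., (1−γ) Σ_{h≥0} γ^h E_{(s,a)∼η_h^π}[1(ζ(s,a)=0)] ≤ ε_ζ. Then v_M^π ≤ v_{M'}^{Ξ(π)} + Vmax·ε_ζ/(1−γ). -/

import Mathlib

open scoped BigOperators

/-- A finite Markov decision process with transition probabilities `P`,
reward function `r`, discount factor `γ`, and initial distribution `ρ`. -/
structure MDP (S A : Type) [Fintype S] [Fintype A] where
  P : S → A → S → ℝ
  r : S → A → ℝ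
  γ : ℝ
  ρ : S → ℝ

variable {S A : Type} [Fintype S] [Fintype A]

/-- `P` has nonnegative rows summing to one, `ρ` is a distribution, `0 ≤ γ < 1`. -/
def IsValidMDP (M : MDP S A) : Prop :=
  (∀ s a s', 0 ≤ M.P s a s') ∧ (∀ s a, ∑ s' : S, M.P s a s' = 1) ∧
  (∀ s, 0 ≤ M.ρ s) ∧ (∑ s : S, M.ρ s = 1) ∧ 0 ≤ M.γ ∧ M.γ < 1

/-- A (stationary, stochastic) policy. -/
def IsPolicy (π : S → A → ℝ) : Prop :=
  (∀ s a, 0 ≤ π s a) ∧ ∀ s, ∑ a : A, π s a = 1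

/-- Marginal state distribution at step `h` under policy `π`. -/
noncomputable def stateDist (M : MDP S A) (π : S → A → ℝ) : ℕ → S → ℝ
  | 0 => M.ρ
  | h + 1 => fun s' => ∑ s : S, ∑ a : A, stateDist M π h s * π s a * M.P s a s'

/-- Expected discounted return of `π` from the initial distribution. -/
noncomputable def value (M : MDP S A) (π : S → A → ℝ) : ℝ :=
  ∑' h : ℕ, M.γ ^ h * ∑ s : S, ∑ a : A, stateDist M π h s * π s a * M.r s a

/-- State-action distribution at step `h` under `π`, starting from `init`. -/
noncomputable def saDist (M : MDP S A) (π : S → A → ℝ) (init : S × A → ℝ) :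
    ℕ → S × A → ℝ
  | 0 => init
  | h + 1 => fun p => ∑ q : S × A, saDist M π init h q * M.P q.1 q.2 p.1 * π p.1 p.2

open Classical in
/-- Action-value function `Q^π(s,a)`: discounted sum of expected rewards when
starting from the state-action pair `(s, a)` and following `π` afterwards. -/
noncomputable def Qf (M : MDP S A) (π : S → A → ℝ) (s : S) (a : A) : ℝ :=
  ∑' h : ℕ, M.γ ^ h * ∑ p : S × A,
    saDist M π (fun q => if q = (s, a) then 1 else 0) h p * M.r p.1 p.2

/-- State-value function `V^π(s)`. -/
noncomputable def Vf (M : MDP S A) (π : S → A → ℝ) (s : S) : ℝ :=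
  ∑ a : A, π s a * Qf M π s a

/-- The absorbing-augmented MDP `M'`: the extra state `none = s_abs` and extra
action `none = a_abs` give zero reward and lead deterministically to `s_abs`. -/
noncomputable def absorb (M : MDP S A) : MDP (Option S) (Option A) where
  P := fun s a s' =>
    match s, a with
    | some s0, some a0 => (match s' with | some t => M.P s0 a0 t | none => 0)
    | _, _ => (match s' with | none => 1 | some _ => 0)
  r := fun s a =>
    match s, a with
    | some s0, some a0 => M.r s0 a0
    | _, _ => 0
  γ := M.γ
  ρ := fun s => match s with | some s0 => M.ρ s0 | none => 0

/-- The ζ-constrained policy projection `Ξ`: it keeps the probability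
`ζ(s,a)·π(a|s)` on supported actions `a ∈ A` and sends all remaining mass
to the absorbing action `a_abs = none`. -/
noncomputable def proj (ζ : Option S → Option A → ℝ) (π : Option S → Option A → ℝ) :
    Option S → Option A → ℝ :=
  fun s a =>
    match a with
    | some _ => ζ s a * π s a
    | none => ∑ a' : Option A, π s a' * (1 - ζ s a')

/-- Lift a policy on `M` to the augmented MDP `M'` (never plays `a_abs` from
a genuine state, and plays `a_abs` from the absorbing state). -/
noncomputable def liftP (π : S → A → ℝ) : Option S → Option A → ℝ :=
  fun s a =>
    match s, a with
    | some s0, some a0 => π s0 a0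
    | some _, none => 0
    | none, a => (match a with | none => 1 | some _ => 0)

/-!
On a genuine state, `Ξ(π)` plays each supported action with `π`'s probability and diverts
the remaining mass to the absorbing action, after which no reward is ever collected. Since
`Q' := Q_{M'}^{Ξ(π)}` obeys `M`'s Bellman equation at genuine pairs and `0 ≤ Q' ≤ Vmax`, the
value `V'` of `Ξ(π)` is a supersolution of `π`'s Bellman equation on `M`, with slack `Vmax`
at unsupported pairs. Unrolling this along the state distributions of `π` (a telescoping sum
whose remainder `γ^N E[V']` is nonnegative) bounds `v_M^π` by `v_{M'}^{Ξ(π)}` plus `Vmax`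
times the discounted probability of unsupported pairs, which is at most `ε_ζ / (1 - γ)`.
-/

open Finset

section Distributions

variable {M : MDP S A} {π : S → A → ℝ}

theorem stateDist_nonneg (hM : IsValidMDP M) (hπ : IsPolicy π) (h : ℕ) (s : S) :
    0 ≤ stateDist M π h s := by
  induction h generalizing s with
  | zero => exact hM.2.2.1 s
  | succ h ih =>
    simp only [stateDist]
    exact sum_nonneg fun s' _ => sum_nonneg fun a _ =>
      mul_nonneg (mul_nonneg (ih s') (hπ.1 s' a)) (hM.1 s' a s)

theorem sum_stateDist (hM : IsValidMDP M) (hπ : IsPolicy π) (h : ℕ) :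
    ∑ s, stateDist M π h s = 1 := by
  induction h with
  | zero => exact hM.2.2.2.1
  | succ h ih =>
    calc ∑ s', ∑ s, ∑ a, stateDist M π h s * π s a * M.P s a s'
        = ∑ s, ∑ a, stateDist M π h s * π s a * ∑ s', M.P s a s' := by
          rw [sum_comm]
          refine sum_congr rfl fun s _ => ?_
          rw [sum_comm]
          simp_rw [mul_sum]
      _ = 1 := by simp_rw [hM.2.1, mul_one, ← mul_sum, hπ.2, mul_one, ih]

theorem saDist_nonneg (hM : IsValidMDP M) (hπ : IsPolicy π) {init : S × A → ℝ}
    (hinit : ∀ q, 0 ≤ init q) (h : ℕ) (p : S × A) : 0 ≤ saDist M π init h p := by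
  induction h generalizing p with
  | zero => exact hinit p
  | succ h ih =>
    exact sum_nonneg fun q _ => mul_nonneg (mul_nonneg (ih q) (hM.1 _ _ _)) (hπ.1 _ _)

theorem sum_saDist (hM : IsValidMDP M) (hπ : IsPolicy π) (init : S × A → ℝ) (h : ℕ) :
    ∑ p, saDist M π init h p = ∑ q, init q := by
  induction h with
  | zero => rfl
  | succ h ih =>
    have hrow : ∀ q : S × A, ∑ p : S × A, M.P q.1 q.2 p.1 * π p.1 p.2 = 1 := fun q => by
      simp_rw [Fintype.sum_prod_type, ← mul_sum, hπ.2, mul_one, hM.2.1]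
    calc ∑ p : S × A, ∑ q, saDist M π init h q * M.P q.1 q.2 p.1 * π p.1 p.2
        = ∑ q, saDist M π init h q * ∑ p : S × A, M.P q.1 q.2 p.1 * π p.1 p.2 := by
          rw [sum_comm]
          simp_rw [mul_sum, mul_assoc]
      _ = ∑ q, init q := by simp_rw [hrow, mul_one, ih]

open Classical in
theorem saDist_eq_sum_mul (init : S × A → ℝ) (h : ℕ) (p : S × A) :
    saDist M π init h p
      = ∑ q, init q * saDist M π (fun q' => if q' = q then 1 else 0) h p := by
  induction h generalizing p with
  | zero => simp [saDist]
  | succ h ih =>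
    simp only [saDist]
    simp_rw [ih, sum_mul]
    rw [sum_comm]
    simp_rw [mul_assoc, ← mul_sum]

theorem saDist_succ' (init : S × A → ℝ) (h : ℕ) :
    saDist M π init (h + 1)
      = saDist M π (fun p => ∑ q, init q * M.P q.1 q.2 p.1 * π p.1 p.2) h := by
  induction h with
  | zero => rfl
  | succ h ih =>
    funext p
    change ∑ q, saDist M π init (h + 1) q * M.P q.1 q.2 p.1 * π p.1 p.2 = _
    rw [ih]
    rfl

theorem saDist_stateDist (h : ℕ) (p : S × A) :
    saDist M π (fun q => M.ρ q.1 * π q.1 q.2) h p = stateDist M π h p.1 * π p.1 p.2 := by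
  induction h generalizing p with
  | zero => rfl
  | succ h ih =>
    simp only [saDist, stateDist]
    simp_rw [ih, Fintype.sum_prod_type, sum_mul]

end Distributions

open Classical in
/-- `Qf M π s a = ∑' h, M.γ ^ h * stepReward M π (s, a) h` holds by definition. -/
noncomputable def stepReward (M : MDP S A) (π : S → A → ℝ) (q : S × A) (h : ℕ) : ℝ :=
  ∑ p, saDist M π (fun q' => if q' = q then 1 else 0) h p * M.r p.1 p.2

section StepReward

variable {M : MDP S A} {π : S → A → ℝ}

theorem sum_saDist_mul_reward (init : S × A → ℝ) (h : ℕ) :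
    ∑ p, saDist M π init h p * M.r p.1 p.2 = ∑ q, init q * stepReward M π q h := by
  simp_rw [saDist_eq_sum_mul init h, sum_mul, stepReward, mul_sum]
  rw [sum_comm]
  simp_rw [mul_assoc]

theorem stepReward_zero (q : S × A) : stepReward M π q 0 = M.r q.1 q.2 := by
  simp [stepReward, saDist]

theorem stepReward_succ (q : S × A) (h : ℕ) :
    stepReward M π q (h + 1)
      = ∑ p, M.P q.1 q.2 p.1 * π p.1 p.2 * stepReward M π p h := by
  classical
  rw [stepReward, saDist_succ', sum_saDist_mul_reward]
  simp [ite_mul]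

theorem stepReward_nonneg (hM : IsValidMDP M) (hπ : IsPolicy π)
    (hr : ∀ s a, 0 ≤ M.r s a) (q : S × A) (h : ℕ) : 0 ≤ stepReward M π q h :=
  sum_nonneg fun p _ =>
    mul_nonneg (saDist_nonneg hM hπ (fun _ => by positivity) h p) (hr p.1 p.2)

theorem abs_stepReward_le (hM : IsValidMDP M) (hπ : IsPolicy π) (q : S × A) (h : ℕ) :
    |stepReward M π q h| ≤ ‖fun p : S × A => M.r p.1 p.2‖ := by
  classical
  have hδ : ∀ q' : S × A, (0 : ℝ) ≤ if q' = q then 1 else 0 := fun _ => by positivity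
  calc |stepReward M π q h|
      ≤ ∑ p, saDist M π (fun q' => if q' = q then 1 else 0) h p * |M.r p.1 p.2| := by
        refine (abs_sum_le_sum_abs _ _).trans_eq (sum_congr rfl fun p _ => ?_)
        rw [abs_mul, abs_of_nonneg (saDist_nonneg hM hπ hδ h p)]
    _ ≤ ∑ p, saDist M π (fun q' => if q' = q then 1 else 0) h p
          * ‖fun p : S × A => M.r p.1 p.2‖ :=
        sum_le_sum fun p _ => mul_le_mul_of_nonneg_left
          (norm_le_pi_norm (fun p : S × A => M.r p.1 p.2) p) (saDist_nonneg hM hπ hδ h p)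
    _ = ‖fun p : S × A => M.r p.1 p.2‖ := by
        rw [← sum_mul, sum_saDist hM hπ]
        simp

theorem summable_stepReward (hM : IsValidMDP M) (hπ : IsPolicy π) (q : S × A) :
    Summable fun h => M.γ ^ h * stepReward M π q h := by
  refine Summable.of_norm_bounded
    ((summable_geometric_of_lt_one hM.2.2.2.2.1 hM.2.2.2.2.2).mul_right
      ‖fun p : S × A => M.r p.1 p.2‖) fun h => ?_
  rw [norm_mul, norm_pow, Real.norm_of_nonneg hM.2.2.2.2.1, Real.norm_eq_abs]
  exact mul_le_mul_of_nonneg_left (abs_stepReward_le hM hπ q h) (pow_nonneg hM.2.2.2.2.1 h)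

theorem Qf_nonneg (hM : IsValidMDP M) (hπ : IsPolicy π) (hr : ∀ s a, 0 ≤ M.r s a)
    (s : S) (a : A) : 0 ≤ Qf M π s a :=
  tsum_nonneg fun h => mul_nonneg (pow_nonneg hM.2.2.2.2.1 h)
    (stepReward_nonneg hM hπ hr (s, a) h)

theorem Vf_nonneg (hM : IsValidMDP M) (hπ : IsPolicy π) (hr : ∀ s a, 0 ≤ M.r s a)
    (s : S) : 0 ≤ Vf M π s :=
  sum_nonneg fun a _ => mul_nonneg (hπ.1 s a) (Qf_nonneg hM hπ hr s a)

theorem Qf_eq_reward_add (hM : IsValidMDP M) (hπ : IsPolicy π) (s : S) (a : A) :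
    Qf M π s a = M.r s a + M.γ * ∑ s', M.P s a s' * Vf M π s' := by
  change ∑' h, M.γ ^ h * stepReward M π (s, a) h = _
  rw [(summable_stepReward hM hπ (s, a)).tsum_eq_zero_add, pow_zero, one_mul, stepReward_zero]
  congr 1
  calc ∑' h, M.γ ^ (h + 1) * stepReward M π (s, a) (h + 1)
      = ∑' h, ∑ p : S × A,
          M.γ * (M.P s a p.1 * π p.1 p.2) * (M.γ ^ h * stepReward M π p h) := by
        refine tsum_congr fun h => ?_
        rw [stepReward_succ, mul_sum]
        exact sum_congr rfl fun p _ => by ring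
    _ = ∑ p : S × A, M.γ * (M.P s a p.1 * π p.1 p.2) * Qf M π p.1 p.2 := by
        rw [Summable.tsum_finsetSum fun p _ => (summable_stepReward hM hπ p).mul_left _]
        simp_rw [tsum_mul_left]
        rfl
    _ = M.γ * ∑ s', M.P s a s' * Vf M π s' := by
        simp_rw [Fintype.sum_prod_type, Vf, mul_sum]
        exact sum_congr rfl fun _ _ => sum_congr rfl fun _ _ => by ring

theorem value_eq_sum_Vf (hM : IsValidMDP M) (hπ : IsPolicy π) :
    value M π = ∑ s, M.ρ s * Vf M π s := by
  calc value M π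
      = ∑' h, ∑ q : S × A, M.ρ q.1 * π q.1 q.2 * (M.γ ^ h * stepReward M π q h) := by
        refine tsum_congr fun h => ?_
        rw [← Fintype.sum_prod_type' (fun s a => stateDist M π h s * π s a * M.r s a)]
        simp_rw [← saDist_stateDist, sum_saDist_mul_reward, mul_sum]
        exact sum_congr rfl fun _ _ => by ring
    _ = ∑ q : S × A, M.ρ q.1 * π q.1 q.2 * Qf M π q.1 q.2 := by
        rw [Summable.tsum_finsetSum fun q _ => (summable_stepReward hM hπ q).mul_left _]
        simp_rw [tsum_mul_left]
        rfl
    _ = ∑ s, M.ρ s * Vf M π s := by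
        simp_rw [Fintype.sum_prod_type, Vf, mul_sum]
        exact sum_congr rfl fun _ _ => sum_congr rfl fun _ _ => by ring

end StepReward

theorem tsum_le_add_tsum_of_le_telescope {f g w : ℕ → ℝ} (hf : Summable f) (hg : Summable g)
    (hw : ∀ n, 0 ≤ w n) (hstep : ∀ n, f n + w (n + 1) ≤ w n + g n) :
    ∑' n, f n ≤ w 0 + ∑' n, g n := by
  have hpartial : ∀ N, ∑ n ∈ range N, f n + w N ≤ w 0 + ∑ n ∈ range N, g n := by
    intro N
    induction N with
    | zero => simp
    | succ N ih =>
      rw [sum_range_succ, sum_range_succ]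
      linarith [hstep N]
  exact le_of_tendsto_of_tendsto' hf.hasSum.tendsto_sum_nat
    (hg.hasSum.tendsto_sum_nat.const_add (w 0)) fun N => by linarith [hpartial N, hw N]

noncomputable def stepMean (M : MDP S A) (π c : S → A → ℝ) (h : ℕ) : ℝ :=
  ∑ s, ∑ a, stateDist M π h s * π s a * c s a

/-- `value M π` is definitionally `discountedSum M π M.r`. -/
noncomputable def discountedSum (M : MDP S A) (π c : S → A → ℝ) : ℝ :=
  ∑' h, M.γ ^ h * stepMean M π c h

section DiscountedSum

variable {M : MDP S A} {π : S → A → ℝ}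

theorem summable_stepMean (hM : IsValidMDP M) (hπ : IsPolicy π) (c : S → A → ℝ) :
    Summable fun h => M.γ ^ h * stepMean M π c h := by
  have hbound : ∀ h, |stepMean M π c h| ≤ ‖c‖ := fun h => by
    calc |stepMean M π c h|
        ≤ ∑ s, ∑ a, stateDist M π h s * π s a * ‖c‖ := by
          refine (abs_sum_le_sum_abs _ _).trans (sum_le_sum fun s _ => ?_)
          refine (abs_sum_le_sum_abs _ _).trans (sum_le_sum fun a _ => ?_)
          have hw := mul_nonneg (stateDist_nonneg hM hπ h s) (hπ.1 s a)
          rw [abs_mul, abs_of_nonneg hw]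
          exact mul_le_mul_of_nonneg_left
            ((norm_le_pi_norm (c s) a).trans (norm_le_pi_norm c s)) hw
      _ = ‖c‖ := by
          simp_rw [← sum_mul, ← mul_sum, hπ.2, mul_one, sum_stateDist hM hπ, one_mul]
  refine Summable.of_norm_bounded
    ((summable_geometric_of_lt_one hM.2.2.2.2.1 hM.2.2.2.2.2).mul_right ‖c‖) fun h => ?_
  rw [norm_mul, norm_pow, Real.norm_of_nonneg hM.2.2.2.2.1, Real.norm_eq_abs]
  exact mul_le_mul_of_nonneg_left (hbound h) (pow_nonneg hM.2.2.2.2.1 h)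

theorem discountedSum_const_mul (κ : ℝ) (c : S → A → ℝ) :
    discountedSum M π (fun s a => κ * c s a) = κ * discountedSum M π c := by
  rw [discountedSum, discountedSum, ← tsum_mul_left]
  refine tsum_congr fun h => ?_
  simp_rw [stepMean, mul_sum]
  exact sum_congr rfl fun _ _ => sum_congr rfl fun _ _ => by ring

theorem sum_stateDist_mul_bellman (V : S → ℝ) (h : ℕ) :
    ∑ s, stateDist M π h s * ∑ a, π s a * (M.r s a + M.γ * ∑ s', M.P s a s' * V s')
      = stepMean M π M.r h + M.γ * ∑ s', stateDist M π (h + 1) s' * V s' := by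
  simp only [stepMean, stateDist, mul_add, sum_add_distrib, mul_sum, sum_mul]
  congr 1
  · exact sum_congr rfl fun _ _ => sum_congr rfl fun _ _ => by ring
  · symm
    rw [sum_comm]
    refine sum_congr rfl fun s _ => ?_
    rw [sum_comm]
    exact sum_congr rfl fun _ _ => sum_congr rfl fun _ _ => by ring

theorem value_le_of_bellman_le (hM : IsValidMDP M) (hπ : IsPolicy π) {V : S → ℝ}
    (hV : ∀ s, 0 ≤ V s) (c : S → A → ℝ)
    (hsuper : ∀ s, ∑ a, π s a * (M.r s a + M.γ * ∑ s', M.P s a s' * V s')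
      ≤ V s + ∑ a, π s a * c s a) :
    value M π ≤ ∑ s, M.ρ s * V s + discountedSum M π c := by
  have hγ := hM.2.2.2.2.1
  have hstep : ∀ h, stepMean M π M.r h + M.γ * ∑ s', stateDist M π (h + 1) s' * V s'
      ≤ ∑ s, stateDist M π h s * V s + stepMean M π c h := by
    intro h
    rw [← sum_stateDist_mul_bellman]
    calc _ ≤ ∑ s, stateDist M π h s * (V s + ∑ a, π s a * c s a) :=
          sum_le_sum fun s _ => mul_le_mul_of_nonneg_left (hsuper s) (stateDist_nonneg hM hπ h s)
      _ = _ := by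
          simp_rw [mul_add, sum_add_distrib, stepMean, mul_sum, mul_assoc]
  have := tsum_le_add_tsum_of_le_telescope (summable_stepMean hM hπ M.r)
    (summable_stepMean hM hπ c) (w := fun h => M.γ ^ h * ∑ s, stateDist M π h s * V s)
    (fun h => mul_nonneg (pow_nonneg hγ h)
      (sum_nonneg fun s _ => mul_nonneg (stateDist_nonneg hM hπ h s) (hV s)))
    fun h => by
      have := mul_le_mul_of_nonneg_left (hstep h) (pow_nonneg hγ h)
      rw [pow_succ]
      linarith
  simp only [pow_zero, one_mul] at this
  exact this

end DiscountedSum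

section Absorb

variable {M : MDP S A}

theorem isValidMDP_absorb (hM : IsValidMDP M) : IsValidMDP (absorb M) := by
  obtain ⟨hP, hPsum, hρ, hρsum, hγ0, hγ1⟩ := hM
  refine ⟨?_, ?_, ?_, ?_, hγ0, hγ1⟩
  · rintro (_ | s) (_ | a) (_ | s') <;> simp [absorb, hP]
  · rintro (_ | s) (_ | a) <;> simp [absorb, Fintype.sum_option, hPsum]
  · rintro (_ | s) <;> simp [absorb, hρ]
  · simpa [absorb, Fintype.sum_option] using hρsum

theorem absorb_r_nonneg (hr : ∀ s a, 0 ≤ M.r s a) (s : Option S) (a : Option A) :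
    0 ≤ (absorb M).r s a := by
  cases s <;> cases a <;> simp [absorb, hr]

theorem Qf_absorb_some (hM : IsValidMDP M) {π : Option S → Option A → ℝ} (hπ : IsPolicy π)
    (s : S) (a : A) :
    Qf (absorb M) π (some s) (some a)
      = M.r s a + M.γ * ∑ s', M.P s a s' * Vf (absorb M) π (some s') := by
  rw [Qf_eq_reward_add (isValidMDP_absorb hM) hπ, Fintype.sum_option]
  simp [absorb]

theorem value_absorb (hM : IsValidMDP M) {π : Option S → Option A → ℝ} (hπ : IsPolicy π) :
    value (absorb M) π = ∑ s, M.ρ s * Vf (absorb M) π (some s) := by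
  rw [value_eq_sum_Vf (isValidMDP_absorb hM) hπ, Fintype.sum_option]
  simp [absorb]

end Absorb

theorem isPolicy_liftP {S A : Type} [Fintype A] {π : S → A → ℝ} (hπ : IsPolicy π) :
    IsPolicy (liftP π) := by
  constructor
  · rintro (_ | s) (_ | a) <;> simp [liftP, hπ.1]
  · rintro (_ | s) <;> simp [liftP, Fintype.sum_option, hπ.2]

theorem isPolicy_proj {S A : Type} [Fintype A] {ζ π : Option S → Option A → ℝ}
    (hπ : IsPolicy π) (hζ0 : ∀ s a, 0 ≤ ζ s a) (hζ1 : ∀ s a, ζ s a ≤ 1)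
    (hζa : ∀ s, ζ s none = 0) :
    IsPolicy (proj ζ π) := by
  constructor
  · rintro s (_ | a)
    · exact sum_nonneg fun a _ => mul_nonneg (hπ.1 s a) (sub_nonneg.2 (hζ1 s a))
    · exact mul_nonneg (hζ0 s _) (hπ.1 s _)
  · intro s
    rw [Fintype.sum_option]
    change ∑ a, π s a * (1 - ζ s a) + ∑ a : A, ζ s (some a) * π s (some a) = 1
    simp_rw [mul_sub, mul_one, sum_sub_distrib, hπ.2, Fintype.sum_option, hζa, mul_zero,
      zero_add, mul_comm (π s _)]
    ring

open Classical in
theorem sum_mul_Qf_absorb_le {M : MDP S A} {ζ : Option S → Option A → ℝ}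
    (hζ01 : ∀ s a, ζ s a = 0 ∨ ζ s a = 1) {π : S → A → ℝ} (hπ : IsPolicy π)
    (hπ' : IsPolicy (proj ζ (liftP π)))
    (hQ0 : ∀ s a, 0 ≤ Qf (absorb M) (proj ζ (liftP π)) s a) {Vmax : ℝ}
    (hQb : ∀ s a, Qf (absorb M) (proj ζ (liftP π)) s a ≤ Vmax) (s : S) :
    ∑ a, π s a * Qf (absorb M) (proj ζ (liftP π)) (some s) (some a)
      ≤ Vf (absorb M) (proj ζ (liftP π)) (some s)
        + ∑ a, π s a * (Vmax * if ζ (some s) (some a) = 0 then 1 else 0) := by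
  have hV : Vf (absorb M) (proj ζ (liftP π)) (some s)
      = proj ζ (liftP π) (some s) none * Qf (absorb M) (proj ζ (liftP π)) (some s) none
        + ∑ a, ζ (some s) (some a) * π s a *
            Qf (absorb M) (proj ζ (liftP π)) (some s) (some a) := by
    rw [Vf, Fintype.sum_option]
    rfl
  have hterm : ∀ a, π s a * Qf (absorb M) (proj ζ (liftP π)) (some s) (some a)
      ≤ ζ (some s) (some a) * π s a * Qf (absorb M) (proj ζ (liftP π)) (some s) (some a)
        + π s a * (Vmax * if ζ (some s) (some a) = 0 then 1 else 0) := fun a => by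
    rcases hζ01 (some s) (some a) with h | h <;> simp only [h, if_true, one_ne_zero, if_false]
    · simpa using mul_le_mul_of_nonneg_left (hQb (some s) (some a)) (hπ.1 s a)
    · simp
  have hnone := mul_nonneg (hπ'.1 (some s) none) (hQ0 (some s) none)
  calc _ ≤ ∑ a, (ζ (some s) (some a) * π s a *
              Qf (absorb M) (proj ζ (liftP π)) (some s) (some a)
            + π s a * (Vmax * if ζ (some s) (some a) = 0 then 1 else 0)) :=
        sum_le_sum fun a _ => hterm a
    _ ≤ _ := by
        rw [sum_add_distrib, hV]
        linarith

open Classical in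
theorem value_le_value_proj_add_general (M : MDP S A) (hM : IsValidMDP M)
    (Vmax : ℝ) (hr : ∀ s a, 0 ≤ M.r s a ∧ M.r s a ≤ Vmax)
    (ζ : Option S → Option A → ℝ)
    (hζ01 : ∀ s a, ζ s a = 0 ∨ ζ s a = 1)
    (hζa : ∀ s, ζ s none = 0)
    (π : S → A → ℝ) (hπ : IsPolicy π)
    (hQb : ∀ s a, Qf (absorb M) (proj ζ (liftP π)) s a ≤ Vmax)
    (εζ : ℝ)
    (hεζ : (1 - M.γ) * ∑' h : ℕ, M.γ ^ h *
        ∑ s : S, ∑ a : A, stateDist M π h s * π s a *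
          (if ζ (some s) (some a) = 0 then (1 : ℝ) else 0) ≤ εζ) :
    value M π ≤ value (absorb M) (proj ζ (liftP π)) + Vmax * εζ / (1 - M.γ) := by
  have hπ' : IsPolicy (proj ζ (liftP π)) :=
    isPolicy_proj (isPolicy_liftP hπ) (fun s a => by rcases hζ01 s a with h | h <;> simp [h])
      (fun s a => by rcases hζ01 s a with h | h <;> simp [h]) hζa
  have hr' := absorb_r_nonneg (M := M) fun s a => (hr s a).1
  have hM' := isValidMDP_absorb hM
  have hQ0 := Qf_nonneg hM' hπ' hr'
  have hVmax : 0 ≤ Vmax := (hQ0 none none).trans (hQb none none)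
  calc value M π
      ≤ ∑ s, M.ρ s * Vf (absorb M) (proj ζ (liftP π)) (some s)
        + discountedSum M π fun s a => Vmax * if ζ (some s) (some a) = 0 then 1 else 0 :=
        value_le_of_bellman_le hM hπ (fun s => Vf_nonneg hM' hπ' hr' (some s)) _ fun s => by
          simpa only [Qf_absorb_some hM hπ'] using sum_mul_Qf_absorb_le hζ01 hπ hπ' hQ0 hQb s
    _ = value (absorb M) (proj ζ (liftP π))
        + Vmax * discountedSum M π fun s a => if ζ (some s) (some a) = 0 then 1 else 0 := by
        rw [value_absorb hM hπ', discountedSum_const_mul]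
    _ ≤ _ := by
        rw [mul_div_assoc]
        gcongr
        rw [le_div_iff₀ (sub_pos.2 hM.2.2.2.2.2), mul_comm]
        exact hεζ

open Classical in
/-- If the discounted probability, under a policy `π` on `M`,
of visiting a state-action pair with `ζ(s,a) = 0` is at most `ε_ζ`, then
`v_M^π ≤ v_{M'}^{Ξ(π)} + Vmax·ε_ζ/(1−γ)`. -/
theorem value_le_value_proj_add (M : MDP S A) (hM : IsValidMDP M)
    (Vmax : ℝ) (hr : ∀ s a, 0 ≤ M.r s a ∧ M.r s a ≤ Vmax)
    (ζ : Option S → Option A → ℝ)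
    (hζ01 : ∀ s a, ζ s a = 0 ∨ ζ s a = 1)
    (hζa : ∀ s, ζ s none = 0) (hζs : ∀ a, ζ none a = 0)
    (π : S → A → ℝ) (hπ : IsPolicy π)
    (hQb : ∀ s a, Qf (absorb M) (proj ζ (liftP π)) s a ≤ Vmax)
    (εζ : ℝ)
    (hεζ : (1 - M.γ) * ∑' h : ℕ, M.γ ^ h *
        ∑ s : S, ∑ a : A, stateDist M π h s * π s a *
          (if ζ (some s) (some a) = 0 then (1 : ℝ) else 0) ≤ εζ) :
    value M π ≤ value (absorb M) (proj ζ (liftP π)) + Vmax * εζ / (1 - M.γ) :=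
  value_le_value_proj_add_general M hM Vmax hr ζ hζ01 hζa π hπ hQb εζ hεζ
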